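/- arXiv:2301.09979 — 4 statements merged into one kernel-verified Lean document; each statement's English description precedes it below -/
import Mathlib

section
/- For every odd integer Δ ≥ 3 there exists a finite simple isolate-free graph G with maximum degree Δ(G) = Δ and a total coalition partition of G with at least (Δ+1)(Δ+3)/4 = Δ²/4 + Δ + 3/4 classes; hence TC(G) ≥ (Δ+1)(Δ+3)/4. -/
open scoped Classical

variable {V : Type*}

/-- `S` is a total dominating set of `G`: every vertex of `G` has a neighbor in `S`. -/
def TotalDomSet (G : SimpleGraph V) (S : Finset V) : Prop :=
  ∀ v : V, ∃ u ∈ S, G.Adj v u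

/-- Two disjoint sets `A`, `B` form a total coalition in `G` if neither is a total
dominating set but their union is. -/
def TotalCoalition [DecidableEq V] (G : SimpleGraph V) (A B : Finset V) : Prop :=
  Disjoint A B ∧ ¬ TotalDomSet G A ∧ ¬ TotalDomSet G B ∧ TotalDomSet G (A ∪ B)

/-- A graph is isolate-free if every vertex has a neighbor. -/
def IsolateFree (G : SimpleGraph V) : Prop :=
  ∀ v : V, ∃ u : V, G.Adj v u

/-- `Ψ` is a total coalition partition of `G`: a partition of the vertex set into
nonempty classes, none of which is a total dominating set, such that every class
forms a total coalition with at least one other class. -/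
def IsTCPartition [DecidableEq V] (G : SimpleGraph V) (Ψ : Finset (Finset V)) : Prop :=
  (∀ C ∈ Ψ, C.Nonempty) ∧
  (∀ v : V, ∃! C, C ∈ Ψ ∧ v ∈ C) ∧
  (∀ C ∈ Ψ, ¬ TotalDomSet G C) ∧
  (∀ C ∈ Ψ, ∃ D ∈ Ψ, D ≠ C ∧ TotalCoalition G C D)

/-- The total coalition graph `TCG(G,Ψ)`: vertices are the classes of `Ψ`, and two
classes are adjacent iff they form a total coalition. -/
def TCG [DecidableEq V] (G : SimpleGraph V) (Ψ : Finset (Finset V)) :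
    SimpleGraph {C // C ∈ Ψ} where
  Adj C D := C ≠ D ∧ TotalCoalition G (C : Finset V) (D : Finset V)
  symm := ⟨by
    rintro C D ⟨hne, hd, hA, hB, hU⟩
    exact ⟨hne.symm, hd.symm, hB, hA, by rwa [Finset.union_comm]⟩⟩
  loopless := ⟨by rintro C ⟨hne, _⟩; exact hne rfl⟩

/-!
Write `Δ = 2k + 1`. Take `k + 1` hubs `hᵢ` forming a clique, singles `sᵢⱼ` with `sᵢⱼ ~ hᵢ`,
and block vertices `bᵢⱼ₀, bᵢⱼ₁`, where for each `j` the blocks `b·ⱼ·` form `K_{k+1} □ K_2`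
and `sᵢⱼ ~ bᵢ'ⱼ₀` for `i' ≠ i`. Partition into the `k + 1` classes `Bᵢ = {hᵢ} ∪ {bᵢⱼβ}` and the
`(k + 1)²` singletons `{sᵢⱼ}`: no `Bᵢ` dominates `hᵢ`, no singleton dominates itself, but
`Bᵢ ∪ {sᵢⱼ}` is a total dominating set. This gives `(k + 1)(k + 2) = (Δ + 1)(Δ + 3)/4` classes,
and every degree is at most `k + (k + 1)`, attained at the hubs.
-/

open Finset

section Transport

variable {W : Type*} {G : SimpleGraph V} {H : SimpleGraph W}

theorem totalDomSet_map_iff (φ : G ≃g H) (S : Finset V) :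
    TotalDomSet H (S.map φ.toEquiv.toEmbedding) ↔ TotalDomSet G S := by
  simp [TotalDomSet, φ.surjective.forall, -mem_map_equiv, mem_map, φ.map_adj_iff]

theorem TotalCoalition.map [DecidableEq V] [DecidableEq W] (φ : G ≃g H) {A B : Finset V}
    (h : TotalCoalition G A B) :
    TotalCoalition H (A.map φ.toEquiv.toEmbedding) (B.map φ.toEquiv.toEmbedding) := by
  obtain ⟨hdisj, hA, hB, hAB⟩ := h
  refine ⟨disjoint_map _ |>.2 hdisj, ?_, ?_, ?_⟩
  · rwa [totalDomSet_map_iff]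
  · rwa [totalDomSet_map_iff]
  · rwa [← map_union, totalDomSet_map_iff]

theorem IsTCPartition.map [DecidableEq V] [DecidableEq W] (φ : G ≃g H)
    {Ψ : Finset (Finset V)} (hΨ : IsTCPartition G Ψ) :
    IsTCPartition H (Ψ.map (mapEmbedding φ.toEquiv.toEmbedding).toEmbedding) := by
  obtain ⟨hne, huniq, hnot, hcoal⟩ := hΨ
  refine ⟨forall_mem_map.2 fun C hC => (hne C hC).map, φ.surjective.forall.2 fun v => ?_,
    forall_mem_map.2 fun C hC => (totalDomSet_map_iff φ C).not.2 (hnot C hC),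
    forall_mem_map.2 fun C hC => ?_⟩
  · obtain ⟨C, ⟨hC, hvC⟩, hCuniq⟩ := huniq v
    refine ⟨_, ⟨mem_map_of_mem _ hC, mem_map_of_mem _ hvC⟩, ?_⟩
    rintro _ ⟨hD, hvD⟩
    obtain ⟨D, hDΨ, rfl⟩ := mem_map.1 hD
    rw [hCuniq D ⟨hDΨ, (mem_map' _).1 hvD⟩]
  · obtain ⟨D, hD, hDC, hCD⟩ := hcoal C hC
    exact ⟨_, mem_map_of_mem _ hD, (map_injective _).ne hDC, hCD.map φ⟩

end Transport

theorem IsTCPartition.isolateFree [DecidableEq V] {G : SimpleGraph V} {Ψ : Finset (Finset V)}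
    (hΨ : IsTCPartition G Ψ) : IsolateFree G := by
  intro v
  obtain ⟨C, ⟨hC, -⟩, -⟩ := hΨ.2.1 v
  obtain ⟨D, -, -, -, -, -, hCD⟩ := hΨ.2.2.2 C hC
  obtain ⟨u, -, hvu⟩ := hCD v
  exact ⟨u, hvu⟩

section Fibers

variable {α : Type*} [Fintype V] [DecidableEq α]

def fiber (f : V → α) (a : α) : Finset V := univ.filter (f · = a)

def fibers [DecidableEq V] [Fintype α] (f : V → α) : Finset (Finset V) := univ.image (fiber f)

@[simp]
theorem mem_fiber {f : V → α} {a : α} {v : V} : v ∈ fiber f a ↔ f v = a := by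
  simp [fiber]

theorem fiber_injective {f : V → α} (hf : f.Surjective) : (fiber f).Injective := by
  intro a b hab
  obtain ⟨v, rfl⟩ := hf a
  have hv : v ∈ fiber f b := hab ▸ mem_fiber.2 rfl
  exact mem_fiber.1 hv

theorem card_fibers [DecidableEq V] [Fintype α] {f : V → α} (hf : f.Surjective) :
    (fibers f).card = Fintype.card α :=
  card_image_of_injective _ (fiber_injective hf)

theorem isTCPartition_fibers [DecidableEq V] [Fintype α] {G : SimpleGraph V} {f : V → α}
    (hf : f.Surjective) (hnot : ∀ a, ¬ TotalDomSet G (fiber f a))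
    (hpair : ∀ a, ∃ b ≠ a, TotalDomSet G (fiber f a ∪ fiber f b)) :
    IsTCPartition G (fibers f) := by
  refine ⟨forall_mem_image.2 fun a _ => ?_, fun v => ⟨fiber f (f v), ?_, ?_⟩,
    forall_mem_image.2 fun a _ => hnot a, forall_mem_image.2 fun a _ => ?_⟩
  · obtain ⟨v, rfl⟩ := hf a
    exact ⟨v, mem_fiber.2 rfl⟩
  · exact ⟨mem_image_of_mem _ (mem_univ _), mem_fiber.2 rfl⟩
  · rintro _ ⟨hC, hv⟩
    obtain ⟨a, -, rfl⟩ := mem_image.1 hC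
    rw [mem_fiber.1 hv]
  · obtain ⟨b, hba, hab⟩ := hpair a
    refine ⟨fiber f b, mem_image_of_mem _ (mem_univ _), (fiber_injective hf).ne hba, ?_,
      hnot a, hnot b, hab⟩
    exact disjoint_filter.2 fun v _ hva hvb => hba (hvb.symm.trans hva)

end Fibers

namespace TCConstruction

open SimpleGraph

abbrev Vertex (k : ℕ) : Type :=
  Fin (k + 1) ⊕ (Fin (k + 1) × Fin (k + 1)) ⊕ (Fin (k + 1) × Fin (k + 1) × Bool)

variable {k : ℕ}

abbrev hub (i : Fin (k + 1)) : Vertex k := .inl i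

abbrev single (i j : Fin (k + 1)) : Vertex k := .inr (.inl (i, j))

abbrev block (i j : Fin (k + 1)) (b : Bool) : Vertex k := .inr (.inr (i, j, b))

-- One orientation of each edge; `fromRel` symmetrises and discards loops.
def rel : Vertex k → Vertex k → Prop
  | .inl _, .inl _ => True
  | .inl i, .inr (.inl (i', _)) => i = i'
  | .inr (.inl (i, j)), .inr (.inr (i', j', b)) => i ≠ i' ∧ j = j' ∧ b = false
  | .inr (.inr (i, j, b)), .inr (.inr (i', j', b')) => j = j' ∧ (i = i' ∨ b = b')
  | _, _ => False

variable (k) in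
def graph : SimpleGraph (Vertex k) := .fromRel rel

def label : Vertex k → Fin (k + 1) ⊕ Fin (k + 1) × Fin (k + 1)
  | .inl i => .inl i
  | .inr (.inl p) => .inr p
  | .inr (.inr (i, _, _)) => .inl i

theorem label_surjective : (label (k := k)).Surjective := by
  rintro (i | p)
  exacts [⟨hub i, rfl⟩, ⟨single p.1 p.2, rfl⟩]

theorem not_totalDomSet_fiber (a : Fin (k + 1) ⊕ Fin (k + 1) × Fin (k + 1)) :
    ¬ TotalDomSet (graph k) (fiber label a) := by
  intro h
  rcases a with i | ⟨i, j⟩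
  · obtain ⟨u, hu, hadj⟩ := h (hub i)
    rcases u with i' | ⟨i', j'⟩ | ⟨i', j', b⟩ <;> simp_all [graph, rel, label]
  · obtain ⟨u, hu, hadj⟩ := h (single i j)
    rcases u with i' | ⟨i', j'⟩ | ⟨i', j', b⟩ <;> simp_all [graph, label]

theorem totalDomSet_fiber_union (i j : Fin (k + 1)) :
    TotalDomSet (graph k) (fiber label (.inl i) ∪ fiber label (.inr (i, j))) := by
  rintro (i' | ⟨i', j'⟩ | ⟨i', j', b⟩)
  · by_cases h : i' = i
    · exact ⟨single i j, by simp [label], by simp [graph, rel, h]⟩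
    · exact ⟨hub i, by simp [label], by simp [graph, rel, h]⟩
  · by_cases h : i' = i
    · exact ⟨hub i, by simp [label], by simp [graph, rel, h]⟩
    · exact ⟨block i j' false, by simp [label], by simp [graph, rel, h]⟩
  · by_cases h : i' = i
    · exact ⟨block i j' !b, by simp [label], by simp [graph, rel, h]⟩
    · exact ⟨block i j' b, by simp [label], by simp [graph, rel, h]⟩

theorem isTCPartition : IsTCPartition (graph k) (fibers label) := by
  refine isTCPartition_fibers label_surjective not_totalDomSet_fiber ?_
  rintro (i | ⟨i, j⟩)
  · exact ⟨.inr (i, 0), by simp, totalDomSet_fiber_union i 0⟩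
  · exact ⟨.inl i, by simp, by rw [union_comm]; exact totalDomSet_fiber_union i j⟩

theorem card_image_erase_le {β : Type*} [DecidableEq β] (g : Fin (k + 1) → β)
    (i : Fin (k + 1)) :
    ((univ.erase i).image g).card ≤ k :=
  card_image_le.trans (by simp)

theorem neighborFinset_hub (i : Fin (k + 1)) :
    (graph k).neighborFinset (hub i) = (univ.erase i).image hub ∪ univ.image (single i) := by
  ext v
  rw [mem_neighborFinset]
  rcases v with i' | ⟨i', j'⟩ | ⟨i', j', b⟩ <;> simp [graph, rel, eq_comm]

theorem degree_hub (i : Fin (k + 1)) : (graph k).degree (hub i) = 2 * k + 1 := by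
  rw [← card_neighborFinset_eq_degree, neighborFinset_hub, card_union_of_disjoint,
    card_image_of_injective _ Sum.inl_injective, card_image_of_injective]
  · simp only [mem_univ, card_erase_of_mem, card_univ, Fintype.card_fin, add_tsub_cancel_right]
    omega
  · intro j j' h; simpa using h
  · simp [Finset.disjoint_left]

theorem degree_single_le (i j : Fin (k + 1)) : (graph k).degree (single i j) ≤ 2 * k + 1 := by
  have hsub : (graph k).neighborFinset (single i j) ⊆
      insert (hub i) ((univ.erase i).image fun i' => block i' j false) := by
    intro v hv
    rw [mem_neighborFinset] at hv
    rcases v with i' | ⟨i', j'⟩ | ⟨i', j', b⟩ <;> simp_all [graph, rel, eq_comm]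
  rw [← card_neighborFinset_eq_degree]
  calc _ ≤ _ := card_le_card hsub
    _ ≤ k + 1 := (card_insert_le _ _).trans (by grw [card_image_erase_le])
    _ ≤ 2 * k + 1 := by omega

theorem degree_block_le (i j : Fin (k + 1)) (b : Bool) :
    (graph k).degree (block i j b) ≤ 2 * k + 1 := by
  have hsub : (graph k).neighborFinset (block i j b) ⊆ insert (block i j !b)
      ((univ.erase i).image (fun i' => block i' j b) ∪ (univ.erase i).image (single · j)) := by
    intro v hv
    rw [mem_neighborFinset] at hv
    rcases v with i' | ⟨i', j'⟩ | ⟨i', j', b'⟩ <;> simp_all [graph, rel, eq_comm, Bool.eq_not]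
    tauto
  rw [← card_neighborFinset_eq_degree]
  calc _ ≤ _ := card_le_card hsub
    _ ≤ k + k + 1 := (card_insert_le _ _).trans
        (by grw [card_union_le, card_image_erase_le, card_image_erase_le])
    _ = 2 * k + 1 := by ring

theorem maxDegree_graph : (graph k).maxDegree = 2 * k + 1 := by
  refine le_antisymm (maxDegree_le_of_forall_degree_le _ _ ?_)
    (degree_hub 0 ▸ degree_le_maxDegree _ _)
  rintro (i | ⟨i, j⟩ | ⟨i, j, b⟩)
  exacts [(degree_hub i).le, degree_single_le i j, degree_block_le i j b]

end TCConstruction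

theorem statement_7_general (Δ : ℕ) (hodd : Odd Δ) :
    ∃ (n : ℕ) (G : SimpleGraph (Fin n)) (_ : DecidableRel G.Adj)
      (Ψ : Finset (Finset (Fin n))),
      IsolateFree G ∧ G.maxDegree = Δ ∧ IsTCPartition G Ψ ∧
      (Δ + 1) * (Δ + 3) / 4 ≤ Ψ.card := by
  obtain ⟨k, rfl⟩ := hodd
  let φ := (TCConstruction.graph k).overFinIso rfl
  have hΨ := TCConstruction.isTCPartition.map φ
  refine ⟨_, _, inferInstance, _, hΨ.isolateFree, ?_, hΨ, ?_⟩
  · rw [← φ.maxDegree_eq, TCConstruction.maxDegree_graph]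
  · rw [card_map, card_fibers TCConstruction.label_surjective]
    refine Nat.div_le_of_le_mul (le_of_eq ?_)
    simp only [Fintype.card_sum, Fintype.card_prod, Fintype.card_fin]
    ring

/-- For every odd `Δ ≥ 3` there is a finite isolate-free graph `G` with maximum degree
`Δ` admitting a total coalition partition with at least `(Δ+1)(Δ+3)/4` classes. -/
theorem statement_7 (Δ : ℕ) (hΔ : 3 ≤ Δ) (hodd : Odd Δ) :
    ∃ (n : ℕ) (G : SimpleGraph (Fin n)) (_ : DecidableRel G.Adj)
      (Ψ : Finset (Finset (Fin n))),
      IsolateFree G ∧ G.maxDegree = Δ ∧ IsTCPartition G Ψ ∧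
      (Δ + 1) * (Δ + 3) / 4 ≤ Ψ.card :=
  statement_7_general Δ hodd
end

section
/- Let G be a finite simple isolate-free graph whose maximum degree Δ = Δ(G) is odd. Then TC(G) ≤ (Δ+1)(Δ+3)/4, i.e., every total coalition partition of G has at most ((Δ+1)/2)·((Δ+3)/2) classes. -/
open scoped Classical

variable {V : Type*}

/-!
The classes of `Ψ` are the vertices of the total coalition graph `TCG G Ψ`, which has no isolated
vertices. For a vertex `w` of `G`, the classes containing a neighbour of `w` form a vertex cover of
`TCG G Ψ` of size at most `Δ`, and every class `E` is avoided by such a cover: take a `w` that `E`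
does not dominate.

In any graph with these two properties, take a maximum matching with `m` matched vertices. The
neighbours of an unmatched vertex are matched; assign each unmatched vertex to one of them. As
there is no augmenting path of length three, at most one end of each matching edge is assigned
anything, and a cover avoiding that end contains everything assigned to it together with at least
`m / 2` matched vertices, so at most `Δ - m / 2` vertices are assigned to it. Hence the graph has at
most `m + (m / 2) (Δ - m / 2) ≤ (Δ + 2)² / 4` vertices, which rounds down to `(Δ + 1)(Δ + 3) / 4`
when `Δ` is odd.
-/

open Finset Equiv

namespace SimpleGraph

section Involution

variable {α : Type*} {H : SimpleGraph α} {σ : Perm α} {x x' y u v : α}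

/-- A matching of `H`, encoded by the involution exchanging the two ends of each of its edges; its
matched vertices form `σ.support`. -/
structure IsMatchingInvolution (H : SimpleGraph α) (σ : Perm α) : Prop where
  involutive : Function.Involutive σ
  adj_apply : ∀ x, σ x ≠ x → H.Adj x (σ x)

theorem isMatchingInvolution_one : H.IsMatchingInvolution 1 :=
  ⟨fun _ => rfl, fun _ h => (h rfl).elim⟩

variable [DecidableEq α]

namespace IsMatchingInvolution

theorem swap_mul (hσ : H.IsMatchingInvolution σ) (hu : σ u = u) (hv : σ v = v)
    (huv : H.Adj u v) : H.IsMatchingInvolution (swap u v * σ) := by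
  have hfix : ∀ w, w ≠ u → w ≠ v → σ w ≠ u ∧ σ w ≠ v := fun w hwu hwv =>
    ⟨fun h => hwu (σ.injective (h.trans hu.symm)), fun h => hwv (σ.injective (h.trans hv.symm))⟩
  constructor
  · intro w
    by_cases hwu : w = u
    · subst hwu; simp [hu, hv]
    by_cases hwv : w = v
    · subst hwv; simp [hu, hv]
    simp [swap_apply_of_ne_of_ne hwu hwv,
      swap_apply_of_ne_of_ne (hfix w hwu hwv).1 (hfix w hwu hwv).2, hσ.involutive w]
  · intro w hw
    by_cases hwu : w = u
    · subst hwu; simpa [hu] using huv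
    by_cases hwv : w = v
    · subst hwv; simpa [hv] using huv.symm
    simp only [Perm.mul_apply,
      swap_apply_of_ne_of_ne (hfix w hwu hwv).1 (hfix w hwu hwv).2] at hw ⊢
    exact hσ.adj_apply w hw

theorem swap_apply_mul (hσ : H.IsMatchingInvolution σ) (x : α) :
    H.IsMatchingInvolution (swap x (σ x) * σ) := by
  have hout : ∀ w, w ≠ x → w ≠ σ x → σ w ≠ x ∧ σ w ≠ σ x := fun w h1 h2 =>
    ⟨fun h => h2 (by rw [← h, hσ.involutive]), fun h => h1 (σ.injective h)⟩
  constructor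
  · intro w
    by_cases h1 : w = x
    · subst h1; simp
    by_cases h2 : w = σ x
    · subst h2; simp [hσ.involutive x]
    have h3 := hout w h1 h2
    simp [swap_apply_of_ne_of_ne h3.1 h3.2, swap_apply_of_ne_of_ne h1 h2, hσ.involutive w]
  · intro w hw
    by_cases h1 : w = x
    · subst h1; simp at hw
    by_cases h2 : w = σ x
    · subst h2; simp [hσ.involutive x] at hw
    have h3 := hout w h1 h2
    simp only [Perm.mul_apply, swap_apply_of_ne_of_ne h3.1 h3.2] at hw ⊢
    exact hσ.adj_apply w hw

end IsMatchingInvolution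

variable [Fintype α]

theorem _root_.Equiv.Perm.card_support_swap_mul_of_apply_eq (hu : σ u = u) (hv : σ v = v)
    (huv : u ≠ v) : #(swap u v * σ).support = #σ.support + 2 := by
  have hdisj : (swap u v).Disjoint σ := fun x => by
    by_cases hx : x = u ∨ x = v
    · rcases hx with rfl | rfl <;> simp [*]
    · push Not at hx
      exact Or.inl (swap_apply_of_ne_of_ne hx.1 hx.2)
  rw [hdisj.card_support_mul, Perm.card_support_swap huv, add_comm]

theorem exists_isMatchingInvolution_maximal (H : SimpleGraph α) :
    ∃ σ, H.IsMatchingInvolution σ ∧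
      ∀ τ, H.IsMatchingInvolution τ → #τ.support ≤ #σ.support := by
  obtain ⟨σ, hσ, hmax⟩ := exists_max_image {σ | H.IsMatchingInvolution σ}
    (fun σ : Perm α => #σ.support) ⟨1, by simpa using isMatchingInvolution_one⟩
  exact ⟨σ, (mem_filter.1 hσ).2, fun τ hτ => hmax τ (by simpa using hτ)⟩

namespace IsMatchingInvolution

theorem card_support_swap_apply_mul (hσ : H.IsMatchingInvolution σ) (hx : σ x ≠ x) :
    #(swap x (σ x) * σ).support + 2 = #σ.support := by
  have hfix : (swap x (σ x) * σ) x = x ∧ (swap x (σ x) * σ) (σ x) = σ x := by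
    simp [hσ.involutive x]
  rw [← Perm.card_support_swap_mul_of_apply_eq hfix.1 hfix.2 hx.symm, swap_mul_self_mul]

theorem card_support_le_two_mul_card_inter (hσ : H.IsMatchingInvolution σ) {S : Finset α}
    (hS : H.IsVertexCover S) : #σ.support ≤ 2 * #(σ.support ∩ S) := by
  have hsub : σ.support ⊆ σ.support ∩ S ∪ (σ.support ∩ S).image σ := by
    intro x hx
    have hσx : σ x ∈ σ.support := by
      simpa [hσ.involutive x] using (Perm.mem_support.1 hx).symm
    rcases hS (hσ.adj_apply x (Perm.mem_support.1 hx)) with h | h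
    · exact mem_union_left _ (mem_inter.2 ⟨hx, h⟩)
    · exact mem_union_right _ (mem_image.2 ⟨σ x, mem_inter.2 ⟨hσx, h⟩, hσ.involutive x⟩)
  calc #σ.support ≤ #(σ.support ∩ S) + #((σ.support ∩ S).image σ) :=
        (card_le_card hsub).trans (card_union_le _ _)
    _ ≤ 2 * #(σ.support ∩ S) := by grw [card_image_le]; omega

theorem two_mul_card_add_card_support_le (hσ : H.IsMatchingInvolution σ) {S A : Finset α}
    (hS : H.IsVertexCover S) (hyS : y ∉ S) (hA : ∀ x ∈ A, σ x = x ∧ H.Adj x y) :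
    2 * #A + #σ.support ≤ 2 * #S := by
  have hAS : A ⊆ S := fun x hx => (hS (hA x hx).2).resolve_right hyS
  have hdisj : Disjoint A (σ.support ∩ S) := by
    rw [Finset.disjoint_left]
    exact fun x hx hx' => Perm.mem_support.1 (mem_inter.1 hx').1 (hA x hx).1
  have := card_le_card (union_subset hAS inter_subset_right : A ∪ σ.support ∩ S ⊆ S)
  rw [card_union_of_disjoint hdisj] at this
  have := hσ.card_support_le_two_mul_card_inter hS
  omega

section Maximal

variable (hσ : H.IsMatchingInvolution σ)
  (hmax : ∀ τ, H.IsMatchingInvolution τ → #τ.support ≤ #σ.support)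
include hσ hmax

theorem apply_ne_of_adj_of_maximal (hx : σ x = x) (hxy : H.Adj x y) : σ y ≠ y := fun hy => by
  have := hmax _ (hσ.swap_mul hx hy hxy)
  rw [Perm.card_support_swap_mul_of_apply_eq hx hy hxy.ne] at this
  omega

theorem not_adj_apply_of_maximal (hy : σ y ≠ y) (hx : σ x = x) (hx' : σ x' = x') (hxx' : x ≠ x')
    (hxy : H.Adj x y) : ¬ H.Adj x' (σ y) := fun hx'y => by
  -- trade the matching edge `y (σ y)` for the two edges `x y` and `x' (σ y)`
  have hσy : σ (σ y) ≠ σ y := by rwa [hσ.involutive y, ne_comm]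
  have hne : ∀ {w}, σ w = w → w ≠ y ∧ w ≠ σ y := fun hw =>
    ⟨fun h => hy (h ▸ hw), fun h => hσy (h ▸ hw)⟩
  have hy' : (swap y (σ y) * σ) y = y := by simp
  have hσy' : (swap y (σ y) * σ) (σ y) = σ y := by simp [hσ.involutive y]
  have hfix : ∀ {w}, σ w = w → (swap y (σ y) * σ) w = w := fun hw => by
    rw [Perm.mul_apply, hw, swap_apply_of_ne_of_ne (hne hw).1 (hne hw).2]
  have hx'1 : (swap x y * (swap y (σ y) * σ)) x' = x' := by
    rw [Perm.mul_apply, hfix hx', swap_apply_of_ne_of_ne hxx'.symm (hne hx').1]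
  have hσy1 : (swap x y * (swap y (σ y) * σ)) (σ y) = σ y := by
    rw [Perm.mul_apply, hσy', swap_apply_of_ne_of_ne (hne hx).2.symm hy]
  have h1 := (hσ.swap_apply_mul y).swap_mul (hfix hx) hy' hxy
  have := hmax _ (h1.swap_mul hx'1 hσy1 hx'y)
  rw [Perm.card_support_swap_mul_of_apply_eq hx'1 hσy1 (hne hx').2,
    Perm.card_support_swap_mul_of_apply_eq (hfix hx) hy' (hne hx).1,
    ← hσ.card_support_swap_apply_mul hy] at this
  omega

theorem four_mul_card_fixed_add_sq_le {p : α → α} (hp : ∀ x, H.Adj x (p x)) {Δ : ℕ}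
    (hcover : ∀ y, ∃ S : Finset α, y ∉ S ∧ #S ≤ Δ ∧ H.IsVertexCover S) :
    4 * #{x | σ x = x} + #σ.support * #σ.support ≤ 2 * Δ * #σ.support := by
  set A : α → Finset α := fun y => {x | σ x = x ∧ p x = y} with hA
  have hA_bound : ∀ y, 2 * #(A y) + #σ.support ≤ 2 * Δ := fun y => by
    obtain ⟨S, hyS, hSΔ, hS⟩ := hcover y
    have := hσ.two_mul_card_add_card_support_le hS hyS (A := A y) fun x hx => by
      simp only [hA, mem_filter, mem_univ, true_and] at hx
      exact ⟨hx.1, hx.2 ▸ hp x⟩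
    omega
  have hA_empty : ∀ y ∈ σ.support, A y = ∅ ∨ A (σ y) = ∅ := fun y hy => by
    have hy := Perm.mem_support.1 hy
    by_contra! h
    obtain ⟨⟨x, hx⟩, ⟨x', hx'⟩⟩ := h
    simp only [hA, mem_filter, mem_univ, true_and] at hx hx'
    have hxx' : x ≠ x' := fun h => hy (by rw [← hx'.2, ← h, hx.2])
    exact hσ.not_adj_apply_of_maximal hmax hy hx.1 hx'.1 hxx' (hx.2 ▸ hp x) (hx'.2 ▸ hp x')
  have hfixed : #{x | σ x = x} = ∑ y ∈ σ.support, #(A y) := by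
    rw [card_eq_sum_card_fiberwise (f := p) (t := σ.support) fun x hx => ?_]
    · simp [hA, filter_filter]
    · simp only [coe_filter, mem_univ, true_and, Set.mem_ofPred_eq] at hx
      exact Perm.mem_support.2 (hσ.apply_ne_of_adj_of_maximal hmax hx (hp x))
  have hsum : ∑ y ∈ σ.support, (2 * (#(A y) + #(A (σ y))) + #σ.support) ≤
      ∑ y ∈ σ.support, 2 * Δ := sum_le_sum fun y hy => by
    rcases hA_empty y hy with h | h
    · simpa [h] using hA_bound (σ y)
    · simpa [h] using hA_bound y
  rw [sum_add_distrib, ← mul_sum, sum_add_distrib,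
    σ.sum_comp σ.support (fun y => #(A y)) fun _ => Perm.mem_support.2, ← hfixed,
    sum_const, sum_const, smul_eq_mul, smul_eq_mul] at hsum
  linarith

end Maximal

end IsMatchingInvolution

theorem four_mul_card_le_sq_of_forall_exists_isVertexCover (hH : ∀ x, ∃ y, H.Adj x y) {Δ : ℕ}
    (hcover : ∀ y, ∃ S : Finset α, y ∉ S ∧ #S ≤ Δ ∧ H.IsVertexCover S) :
    4 * Fintype.card α ≤ (Δ + 2) ^ 2 := by
  obtain ⟨σ, hσ, hmax⟩ := exists_isMatchingInvolution_maximal H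
  choose p hp using hH
  have hbound := hσ.four_mul_card_fixed_add_sq_le hmax hp hcover
  have hcard : Fintype.card α = #σ.support + #{x | σ x = x} := by
    rw [← card_univ, ← card_filter_add_card_filter_not (fun x => σ x ≠ x)]
    simp [Perm.support]
  rw [hcard]
  nlinarith [sq_nonneg ((Δ : ℤ) + 2 - #σ.support)]

end Involution

end SimpleGraph

section Coalition

variable [DecidableEq V] {G : SimpleGraph V} {Ψ : Finset (Finset V)}

theorem IsTCPartition.exists_tcg_adj (hΨ : IsTCPartition G Ψ) (C : Ψ) :
    ∃ D, (TCG G Ψ).Adj C D := by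
  obtain ⟨D, hD, hDC, hCD⟩ := hΨ.2.2.2 C C.2
  exact ⟨⟨D, hD⟩, fun h => hDC (congrArg Subtype.val h).symm, hCD⟩

theorem IsTCPartition.exists_tcg_isVertexCover [Fintype V] [DecidableRel G.Adj]
    (hΨ : IsTCPartition G Ψ) (E : Ψ) :
    ∃ S : Finset Ψ, E ∉ S ∧ #S ≤ G.maxDegree ∧ (TCG G Ψ).IsVertexCover S := by
  obtain ⟨w, hw⟩ : ∃ w, ∀ u ∈ (E : Finset V), ¬ G.Adj w u := by
    simpa [TotalDomSet] using hΨ.2.2.1 E E.2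
  choose cls hcls hcls_unique using hΨ.2.1
  have hcls_eq : ∀ {u} (C : Ψ), u ∈ (C : Finset V) → ⟨cls u, (hcls u).1⟩ = C := fun C hu =>
    Subtype.ext (hcls_unique _ C ⟨C.2, hu⟩).symm
  refine ⟨(G.neighborFinset w).image fun u => ⟨cls u, (hcls u).1⟩, ?_, ?_, ?_⟩
  · simp only [mem_image, SimpleGraph.mem_neighborFinset, not_exists, not_and]
    intro u hwu hE
    exact hw u (hE ▸ (hcls u).2) hwu
  · exact card_image_le.trans
      ((G.card_neighborFinset_eq_degree w).trans_le (G.degree_le_maxDegree w))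
  · intro C D hCD
    obtain ⟨u, hu, hwu⟩ := hCD.2.2.2.2 w
    simp only [coe_image, Set.mem_image, mem_coe, SimpleGraph.mem_neighborFinset]
    rcases mem_union.1 hu with hu | hu
    · exact Or.inl ⟨u, hwu, hcls_eq C hu⟩
    · exact Or.inr ⟨u, hwu, hcls_eq D hu⟩

end Coalition

theorem Nat.le_div_four_of_four_mul_le_sq_of_odd {n Δ : ℕ} (hΔ : Odd Δ)
    (h : 4 * n ≤ (Δ + 2) ^ 2) :
    n ≤ (Δ + 1) * (Δ + 3) / 4 := by
  obtain ⟨t, rfl⟩ := hΔ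
  rw [Nat.le_div_iff_mul_le (by norm_num)]
  ring_nf at h ⊢
  omega

theorem statement_9_general [Fintype V] [DecidableEq V]
    (G : SimpleGraph V) [DecidableRel G.Adj]
    (hodd : Odd G.maxDegree)
    (Ψ : Finset (Finset V)) (hΨ : IsTCPartition G Ψ) :
    Ψ.card ≤ (G.maxDegree + 1) * (G.maxDegree + 3) / 4 := by
  have h := (TCG G Ψ).four_mul_card_le_sq_of_forall_exists_isVertexCover
    hΨ.exists_tcg_adj hΨ.exists_tcg_isVertexCover
  rw [Fintype.card_coe] at h
  exact Nat.le_div_four_of_four_mul_le_sq_of_odd hodd h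

/-- If `Δ(G)` is odd, every total coalition partition of the isolate-free graph `G`
has at most `(Δ(G)+1)(Δ(G)+3)/4` classes. -/
theorem statement_9 [Fintype V] [DecidableEq V]
    (G : SimpleGraph V) [DecidableRel G.Adj] (hG : IsolateFree G)
    (hodd : Odd G.maxDegree)
    (Ψ : Finset (Finset V)) (hΨ : IsTCPartition G Ψ) :
    Ψ.card ≤ (G.maxDegree + 1) * (G.maxDegree + 3) / 4 :=
  statement_9_general G hodd Ψ hΨ
end

section
/- Let G be a finite simple isolate-free graph with maximum degree Δ = Δ(G), let Ψ be a total coalition partition of G, and suppose the maximum size of a matching in the total coalition graph TCG(G,Ψ) equals m. Then the number of classes of Ψ satisfies |Ψ| ≤ m(Δ − m + 2). -/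
open scoped Classical

variable {V : Type*}

/-- The total coalition graph `TCG(G,Ψ)` has a matching of size `m`: there are `2m`
pairwise distinct classes `A i`, `B i` of `Ψ` such that `A i` and `B i` form a total
coalition for each `i`. -/
def HasMatchingOfSize [DecidableEq V] (G : SimpleGraph V) (Ψ : Finset (Finset V))
    (m : ℕ) : Prop :=
  ∃ A B : Fin m → Finset V,
    (∀ i, A i ∈ Ψ) ∧ (∀ i, B i ∈ Ψ) ∧
    Function.Injective (Sum.elim A B) ∧
    ∀ i, TotalCoalition G (A i) (B i)


/-! Fix a maximum matching `(A i, B i)` of the total coalition graph. An unmatched class has a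
coalition partner, which by maximality is matched, so it is a partner of an end of some matching
edge. If a class `X` fails to dominate a vertex `v`, then every coalition partner of `X`, and one
end of every matching edge, meets the neighbourhood of `v`; the classes being disjoint, `X` has at
most `Δ - m` unmatched partners. As there is no augmenting path `C - A i - B i - C'`, the unmatched
partners of the edge `i` all sit at one end, so there are at most `Δ - m` of them, and
`|Ψ| ≤ 2m + m(Δ - m)`. -/

open Finset Function

theorem TotalCoalition.symm [DecidableEq V] {G : SimpleGraph V} {X Y : Finset V}
    (h : TotalCoalition G X Y) : TotalCoalition G Y X := by
  obtain ⟨hdisj, hX, hY, hXY⟩ := h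
  exact ⟨hdisj.symm, hY, hX, by rwa [Finset.union_comm]⟩

theorem TotalDomSet.exists_adj_of_union [DecidableEq V] {G : SimpleGraph V} {X Y : Finset V}
    (h : TotalDomSet G (X ∪ Y)) {v : V} (hv : ∀ u ∈ X, ¬ G.Adj v u) :
    ∃ u ∈ Y, G.Adj v u := by
  obtain ⟨u, hu, hvu⟩ := h v
  exact ⟨u, (Finset.mem_union.1 hu).resolve_left fun huX => hv u huX hvu, hvu⟩

theorem IsTCPartition.pairwiseDisjoint [DecidableEq V] {G : SimpleGraph V}
    {Ψ : Finset (Finset V)} (hΨ : IsTCPartition G Ψ) :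
    (Ψ : Set (Finset V)).PairwiseDisjoint id := by
  intro C hC D hD hCD
  refine Finset.disjoint_left.2 fun v hvC hvD => hCD ?_
  exact (hΨ.2.1 v).unique ⟨hC, hvC⟩ ⟨hD, hvD⟩

theorem card_filter_inter_nonempty_le [DecidableEq V] {Ψ : Finset (Finset V)}
    (hΨ : (Ψ : Set (Finset V)).PairwiseDisjoint id) (N : Finset V) :
    #{C ∈ Ψ | (C ∩ N).Nonempty} ≤ #N := by
  have hdisj : (({C ∈ Ψ | (C ∩ N).Nonempty} : Finset _) : Set (Finset V)).PairwiseDisjoint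
      (· ∩ N) :=
    (hΨ.subset (coe_subset.2 (filter_subset _ _))).mono fun C => inter_subset_left
  calc #{C ∈ Ψ | (C ∩ N).Nonempty}
      ≤ #({C ∈ Ψ | (C ∩ N).Nonempty}.biUnion (· ∩ N)) :=
        card_le_card_biUnion hdisj fun C hC => (mem_filter.1 hC).2
    _ ≤ #N := card_le_card (biUnion_subset.2 fun C _ => inter_subset_right)

section Matching

variable [DecidableEq V] {G : SimpleGraph V} {Ψ : Finset (Finset V)} {m : ℕ}

-- `HasMatchingOfSize G Ψ m` unfolds to `∃ A B, IsCoalitionMatching G Ψ A B`.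
def IsCoalitionMatching (G : SimpleGraph V) (Ψ : Finset (Finset V)) (A B : Fin m → Finset V) :
    Prop :=
  (∀ i, A i ∈ Ψ) ∧ (∀ i, B i ∈ Ψ) ∧ Injective (Sum.elim A B) ∧
    ∀ i, TotalCoalition G (A i) (B i)

def matchedClasses (A B : Fin m → Finset V) : Finset (Finset V) :=
  univ.image (Sum.elim A B)

@[simp]
theorem mem_matchedClasses {A B : Fin m → Finset V} {C : Finset V} :
    C ∈ matchedClasses A B ↔ (∃ i, A i = C) ∨ ∃ i, B i = C := by
  simp [matchedClasses, Sum.exists]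

theorem mem_matchedClasses_cons {A B : Fin m → Finset V} {C D X : Finset V} :
    X ∈ matchedClasses (Fin.cons C A : Fin (m + 1) → Finset V) (Fin.cons D B) ↔
      X = C ∨ X = D ∨ X ∈ matchedClasses A B := by
  simp only [mem_matchedClasses, Fin.exists_fin_succ, Fin.cons_zero, Fin.cons_succ]
  tauto

namespace IsCoalitionMatching

variable {A B : Fin m → Finset V}

theorem left_mem (h : IsCoalitionMatching G Ψ A B) (i : Fin m) : A i ∈ Ψ := h.1 i

theorem right_mem (h : IsCoalitionMatching G Ψ A B) (i : Fin m) : B i ∈ Ψ := h.2.1 i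

theorem totalCoalition (h : IsCoalitionMatching G Ψ A B) (i : Fin m) :
    TotalCoalition G (A i) (B i) :=
  h.2.2.2 i

theorem injective (h : IsCoalitionMatching G Ψ A B) : Injective (Sum.elim A B) := h.2.2.1

theorem left_injective (h : IsCoalitionMatching G Ψ A B) : Injective A :=
  h.injective.comp Sum.inl_injective

theorem right_injective (h : IsCoalitionMatching G Ψ A B) : Injective B :=
  h.injective.comp Sum.inr_injective

theorem left_ne_right (h : IsCoalitionMatching G Ψ A B) (i k : Fin m) : A i ≠ B k :=
  fun e => Sum.inl_ne_inr (h.injective e)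

theorem matchedClasses_subset (h : IsCoalitionMatching G Ψ A B) : matchedClasses A B ⊆ Ψ := by
  intro C hC
  rcases mem_matchedClasses.1 hC with ⟨i, rfl⟩ | ⟨i, rfl⟩
  exacts [h.left_mem i, h.right_mem i]

theorem card_matchedClasses (h : IsCoalitionMatching G Ψ A B) :
    #(matchedClasses A B) = 2 * m := by
  rw [matchedClasses, card_image_of_injective _ h.injective, card_univ, Fintype.card_sum,
    Fintype.card_fin, two_mul]

theorem cons (h : IsCoalitionMatching G Ψ A B) {C D : Finset V} (hC : C ∈ Ψ) (hD : D ∈ Ψ)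
    (hCm : C ∉ matchedClasses A B) (hDm : D ∉ matchedClasses A B) (hCD : C ≠ D)
    (hcoal : TotalCoalition G C D) :
    IsCoalitionMatching G Ψ (Fin.cons C A : Fin (m + 1) → Finset V) (Fin.cons D B) := by
  simp only [mem_matchedClasses, not_or, not_exists] at hCm hDm
  refine ⟨?_, ?_, ?_, ?_⟩
  · simpa [Fin.forall_fin_succ] using ⟨hC, h.left_mem⟩
  · simpa [Fin.forall_fin_succ] using ⟨hD, h.right_mem⟩
  · refine Injective.sumElim (Fin.cons_injective_iff.2 ⟨?_, h.left_injective⟩)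
      (Fin.cons_injective_iff.2 ⟨?_, h.right_injective⟩) ?_
    · simpa using hCm.1
    · simpa using hDm.2
    · intro a b
      cases a using Fin.cases <;> cases b using Fin.cases <;>
        simp only [Fin.cons_zero, Fin.cons_succ]
      exacts [hCD, fun e => hCm.2 _ e.symm, hDm.1 _, h.left_ne_right _ _]
  · simpa [Fin.forall_fin_succ] using ⟨hcoal, h.totalCoalition⟩

theorem comp_succAbove {A B : Fin (m + 1) → Finset V} (h : IsCoalitionMatching G Ψ A B)
    (j : Fin (m + 1)) : IsCoalitionMatching G Ψ (A ∘ j.succAbove) (B ∘ j.succAbove) := by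
  refine ⟨fun i => h.left_mem _, fun i => h.right_mem _, ?_, fun i => h.totalCoalition _⟩
  rw [← Sum.elim_comp_map]
  exact h.injective.comp (Fin.succAbove_right_injective.sumMap Fin.succAbove_right_injective)

theorem mem_matchedClasses_comp_succAbove {A B : Fin (m + 1) → Finset V}
    (h : IsCoalitionMatching G Ψ A B) {j : Fin (m + 1)} {C : Finset V}
    (hC : C ∈ matchedClasses (A ∘ j.succAbove) (B ∘ j.succAbove)) :
    C ∈ matchedClasses A B ∧ C ≠ A j ∧ C ≠ B j := by
  rcases mem_matchedClasses.1 hC with ⟨i, rfl⟩ | ⟨i, rfl⟩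
  · exact ⟨mem_matchedClasses.2 (.inl ⟨_, rfl⟩),
      h.left_injective.ne (Fin.succAbove_ne j i), h.left_ne_right _ _⟩
  · exact ⟨mem_matchedClasses.2 (.inr ⟨_, rfl⟩),
      (h.left_ne_right _ _).symm, h.right_injective.ne (Fin.succAbove_ne j i)⟩

theorem augment_along_edge (h : IsCoalitionMatching G Ψ A B) (j : Fin m) {C C' : Finset V}
    (hC : C ∈ Ψ) (hC' : C' ∈ Ψ) (hCm : C ∉ matchedClasses A B)
    (hC'm : C' ∉ matchedClasses A B) (hCC' : C ≠ C') (hAC : TotalCoalition G (A j) C) (hBC' : TotalCoalition G (B j) C') :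
    HasMatchingOfSize G Ψ (m + 1) := by
  obtain ⟨n, rfl⟩ : ∃ n, m = n + 1 := Nat.exists_eq_succ_of_ne_zero j.pos.ne'
  have mem_rest {X : Finset V} := h.mem_matchedClasses_comp_succAbove (j := j) (C := X)
  have matched_left : A j ∈ matchedClasses A B := mem_matchedClasses.2 (.inl ⟨j, rfl⟩)
  have matched_right : B j ∈ matchedClasses A B := mem_matchedClasses.2 (.inr ⟨j, rfl⟩)
  -- replace the edge `(A j, B j)` by the edges `(C, A j)` and `(B j, C')`
  have hstep := (h.comp_succAbove j).cons hC (h.left_mem j) (fun hm => hCm (mem_rest hm).1)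
    (fun hm => (mem_rest hm).2.1 rfl) (fun e => hCm (e ▸ matched_left)) hAC.symm
  refine ⟨_, _, hstep.cons (h.right_mem j) hC' ?_ ?_ (fun e => hC'm (e ▸ matched_right)) hBC'⟩
  · rw [mem_matchedClasses_cons]
    rintro (hm | hm | hm)
    exacts [hCm (hm ▸ matched_right), h.left_ne_right _ _ hm.symm, (mem_rest hm).2.2 rfl]
  · rw [mem_matchedClasses_cons]
    rintro (hm | hm | hm)
    exacts [hCC' hm.symm, hC'm (hm ▸ matched_left), hC'm (mem_rest hm).1]

theorem card_unmatched_partners_add_le [Fintype V] [DecidableRel G.Adj]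
    (h : IsCoalitionMatching G Ψ A B) (hΨ : (Ψ : Set (Finset V)).PairwiseDisjoint id)
    {X : Finset V} (hX : ¬ TotalDomSet G X) :
    #{C ∈ Ψ \ matchedClasses A B | TotalCoalition G X C} + m ≤ G.maxDegree := by
  obtain ⟨v, hv⟩ : ∃ v, ∀ u ∈ X, ¬ G.Adj v u := by simpa [TotalDomSet] using hX
  set N := G.neighborFinset v
  have meets_of_union {Y Z : Finset V} (hYZ : TotalDomSet G (Y ∪ Z))
      (hY : ∀ u ∈ Y, ¬ G.Adj v u) : (Z ∩ N).Nonempty := by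
    obtain ⟨u, huZ, hvu⟩ := hYZ.exists_adj_of_union hY
    exact ⟨u, mem_inter.2 ⟨huZ, (G.mem_neighborFinset v u).2 hvu⟩⟩
  -- every matching edge dominates `v`, so one of its two classes meets `N`
  let e : Fin m → Fin m ⊕ Fin m := fun k => if (A k ∩ N).Nonempty then .inl k else .inr k
  have he : Injective e := by
    intro k l hkl
    simp only [e] at hkl
    split_ifs at hkl <;> simpa using hkl
  have he_meets (k : Fin m) : (Sum.elim A B (e k) ∩ N).Nonempty := by
    by_cases hk : (A k ∩ N).Nonempty
    · simp [e, hk]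
    · simp only [e, hk, if_false, Sum.elim_inr]
      refine meets_of_union (h.totalCoalition k).2.2.2 fun u hu hvu => hk ?_
      exact ⟨u, mem_inter.2 ⟨hu, (G.mem_neighborFinset v u).2 hvu⟩⟩
  set P := {C ∈ Ψ \ matchedClasses A B | TotalCoalition G X C}
  set Q := univ.image (Sum.elim A B ∘ e)
  have hPQ : Disjoint P Q := by
    refine disjoint_left.2 fun C hCP hCQ => ?_
    obtain ⟨k, -, rfl⟩ := mem_image.1 hCQ
    exact (mem_sdiff.1 (mem_filter.1 hCP).1).2 (mem_image_of_mem _ (mem_univ _))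
  have hQ : #Q = m := by
    rw [card_image_of_injective _ (h.injective.comp he), card_univ, Fintype.card_fin]
  have hsub : P ∪ Q ⊆ {C ∈ Ψ | (C ∩ N).Nonempty} := by
    refine union_subset (fun C hC => ?_) (fun C hC => ?_)
    · obtain ⟨hC, hXC⟩ := mem_filter.1 hC
      exact mem_filter.2 ⟨(mem_sdiff.1 hC).1, meets_of_union hXC.2.2.2 hv⟩
    · obtain ⟨k, -, rfl⟩ := mem_image.1 hC
      exact mem_filter.2
        ⟨h.matchedClasses_subset (mem_image_of_mem _ (mem_univ _)), he_meets k⟩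
  calc #P + m = #(P ∪ Q) := by rw [card_union_of_disjoint hPQ, hQ]
    _ ≤ #{C ∈ Ψ | (C ∩ N).Nonempty} := card_le_card hsub
    _ ≤ #N := card_filter_inter_nonempty_le hΨ N
    _ ≤ G.maxDegree := G.degree_le_maxDegree v

theorem unmatched_subset_biUnion_partners (h : IsCoalitionMatching G Ψ A B)
    (hΨ : IsTCPartition G Ψ) (hmax : ¬ HasMatchingOfSize G Ψ (m + 1)) :
    Ψ \ matchedClasses A B ⊆ univ.biUnion fun j =>
      {C ∈ Ψ \ matchedClasses A B | TotalCoalition G (A j) C ∨ TotalCoalition G (B j) C} := by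
  intro C hC
  obtain ⟨hCΨ, hCm⟩ := mem_sdiff.1 hC
  obtain ⟨D, hDΨ, hDC, hCD⟩ := hΨ.2.2.2 C hCΨ
  have hDm : D ∈ matchedClasses A B := by
    by_contra hDm
    exact hmax ⟨_, _, h.cons hCΨ hDΨ hCm hDm hDC.symm hCD⟩
  rcases mem_matchedClasses.1 hDm with ⟨j, rfl⟩ | ⟨j, rfl⟩
  · exact mem_biUnion.2 ⟨j, mem_univ j, mem_filter.2 ⟨hC, .inl hCD.symm⟩⟩
  · exact mem_biUnion.2 ⟨j, mem_univ j, mem_filter.2 ⟨hC, .inr hCD.symm⟩⟩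

theorem card_edge_partners_add_le [Fintype V] [DecidableRel G.Adj]
    (h : IsCoalitionMatching G Ψ A B) (hΨ : (Ψ : Set (Finset V)).PairwiseDisjoint id)
    (hmax : ¬ HasMatchingOfSize G Ψ (m + 1)) (j : Fin m) :
    #{C ∈ Ψ \ matchedClasses A B | TotalCoalition G (A j) C ∨ TotalCoalition G (B j) C} + m
      ≤ G.maxDegree := by
  -- without an augmenting path through edge `j`, all its unmatched partners sit at one end
  by_cases hB : ∃ C' ∈ Ψ \ matchedClasses A B, TotalCoalition G (B j) C'
  · obtain ⟨C', hC', hBC'⟩ := hB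
    refine le_trans (Nat.add_le_add_right (card_le_card fun C hC => ?_) m)
      (h.card_unmatched_partners_add_le hΨ (h.totalCoalition j).2.2.1)
    obtain ⟨hC, hAC | hBC⟩ := mem_filter.1 hC
    · obtain rfl : C = C' := by
        by_contra hCC'
        exact hmax (h.augment_along_edge j (mem_sdiff.1 hC).1 (mem_sdiff.1 hC').1
          (mem_sdiff.1 hC).2 (mem_sdiff.1 hC').2 hCC' hAC hBC')
      exact mem_filter.2 ⟨hC, hBC'⟩
    · exact mem_filter.2 ⟨hC, hBC⟩
  · push Not at hB
    refine le_trans (Nat.add_le_add_right (card_le_card fun C hC => ?_) m)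
      (h.card_unmatched_partners_add_le hΨ (h.totalCoalition j).2.1)
    obtain ⟨hC, hAC | hBC⟩ := mem_filter.1 hC
    · exact mem_filter.2 ⟨hC, hAC⟩
    · exact absurd hBC (hB C hC)

end IsCoalitionMatching

end Matching

theorem statement_10_general [Fintype V] [DecidableEq V]
    (G : SimpleGraph V) [DecidableRel G.Adj]
    (Ψ : Finset (Finset V)) (hΨ : IsTCPartition G Ψ)
    (m : ℕ) (hm : HasMatchingOfSize G Ψ m)
    (hmax : ∀ m', HasMatchingOfSize G Ψ m' → m' ≤ m) :
    (Ψ.card : ℤ) ≤ (m : ℤ) * ((G.maxDegree : ℤ) - (m : ℤ) + 2) := by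
  obtain ⟨A, B, hM⟩ : ∃ A B : Fin m → Finset V, IsCoalitionMatching G Ψ A B := hm
  have hmax' : ¬ HasMatchingOfSize G Ψ (m + 1) := fun h => by simpa using hmax _ h
  have hunmatched : #(Ψ \ matchedClasses A B) + m * m ≤ m * G.maxDegree :=
    calc #(Ψ \ matchedClasses A B) + m * m
        ≤ ∑ j : Fin m, (#{C ∈ Ψ \ matchedClasses A B |
            TotalCoalition G (A j) C ∨ TotalCoalition G (B j) C} + m) := by
          rw [sum_add_distrib, sum_const, card_univ, Fintype.card_fin, smul_eq_mul]
          exact Nat.add_le_add_right ((card_le_card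
            (hM.unmatched_subset_biUnion_partners hΨ hmax')).trans card_biUnion_le) _
      _ ≤ ∑ _j : Fin m, G.maxDegree :=
          sum_le_sum fun j _ => hM.card_edge_partners_add_le hΨ.pairwiseDisjoint hmax' j
      _ = m * G.maxDegree := by simp
  have hcard : #Ψ = #(Ψ \ matchedClasses A B) + 2 * m := by
    rw [← hM.card_matchedClasses, card_sdiff_add_card_eq_card hM.matchedClasses_subset]
  have hunmatched_int : (#(Ψ \ matchedClasses A B) : ℤ) + m * m ≤ m * G.maxDegree := by
    exact_mod_cast hunmatched
  rw [hcard]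
  push_cast
  linarith

/-- If the maximum matching size of the total coalition graph `TCG(G,Ψ)` is `m`, then
the number of classes of `Ψ` is at most `m(Δ(G) − m + 2)`. -/
theorem statement_10 [Fintype V] [DecidableEq V]
    (G : SimpleGraph V) [DecidableRel G.Adj] (hG : IsolateFree G)
    (Ψ : Finset (Finset V)) (hΨ : IsTCPartition G Ψ)
    (m : ℕ) (hm : HasMatchingOfSize G Ψ m)
    (hmax : ∀ m', HasMatchingOfSize G Ψ m' → m' ≤ m) :
    (Ψ.card : ℤ) ≤ (m : ℤ) * ((G.maxDegree : ℤ) - (m : ℤ) + 2) :=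
  statement_10_general G Ψ hΨ m hm hmax
end

section
/- Let G be a finite simple isolate-free graph with minimum degree δ(G), and let Ψ be a total coalition partition of G. If A₁,B₁,…,A_m,B_m are 2m pairwise distinct classes of Ψ such that A_i and B_i form a total coalition for each i (i.e., these pairs form a matching of size m in the total coalition graph TCG(G,Ψ)), then m ≤ δ(G). -/
open scoped Classical

variable {V : Type*}

/-! Each union `A i ∪ B i` is a total dominating set, and these unions are pairwise disjoint
because the `2m` classes are distinct blocks of a partition. Hence every vertex `v` has a
neighbor in each of `m` disjoint sets, and choosing one in each gives `m` distinct neighbors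
of `v`. -/

open Function

theorem IsTCPartition.disjoint_of_ne [DecidableEq V] {G : SimpleGraph V}
    {Ψ : Finset (Finset V)} (hΨ : IsTCPartition G Ψ) {C D : Finset V} (hC : C ∈ Ψ)
    (hD : D ∈ Ψ) (hne : C ≠ D) : Disjoint C D :=
  Finset.disjoint_left.2 fun _ huC huD =>
    hne ((hΨ.2.1 _).unique ⟨hC, huC⟩ ⟨hD, huD⟩)

theorem IsTCPartition.pairwise_disjoint_union [DecidableEq V] {G : SimpleGraph V}
    {Ψ : Finset (Finset V)} (hΨ : IsTCPartition G Ψ) {ι : Type*} {A B : ι → Finset V}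
    (hA : ∀ i, A i ∈ Ψ) (hB : ∀ i, B i ∈ Ψ) (hinj : Injective (Sum.elim A B)) :
    Pairwise (Disjoint on fun i => A i ∪ B i) := by
  have hclass : ∀ x, Sum.elim A B x ∈ Ψ := by rintro (i | i); exacts [hA i, hB i]
  have hdisj : ∀ x y, x ≠ y → Disjoint (Sum.elim A B x) (Sum.elim A B y) :=
    fun x y hxy => hΨ.disjoint_of_ne (hclass x) (hclass y) (hinj.ne hxy)
  intro i j hij
  simp only [onFun, Finset.disjoint_union_left, Finset.disjoint_union_right]
  exact ⟨⟨hdisj (.inl i) (.inl j) (by simpa using hij), hdisj (.inr i) (.inl j) Sum.inr_ne_inl⟩,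
    hdisj (.inl i) (.inr j) Sum.inl_ne_inr, hdisj (.inr i) (.inr j) (by simpa using hij)⟩

theorem card_le_degree_of_pairwise_disjoint_totalDomSet {G : SimpleGraph V}
    [G.LocallyFinite] {ι : Type*} [Fintype ι] {S : ι → Finset V}
    (hS : Pairwise (Disjoint on S)) (hdom : ∀ i, TotalDomSet G (S i)) (v : V) :
    Fintype.card ι ≤ G.degree v := by
  choose f hfS hadj using fun i => hdom i v
  have hinj : Injective fun i => (⟨f i, hadj i⟩ : G.neighborSet v) := by
    intro i j hij
    by_contra hne
    have hfij : f i = f j := congrArg Subtype.val hij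
    exact Finset.disjoint_left.1 (hS hne) (hfS i) (hfij ▸ hfS j)
  exact (Fintype.card_le_of_injective _ hinj).trans_eq (G.card_neighborSet_eq_degree v)

theorem card_le_minDegree_of_pairwise_disjoint_totalDomSet {G : SimpleGraph V} [Fintype V]
    [Nonempty V] [DecidableRel G.Adj] {ι : Type*} [Fintype ι] {S : ι → Finset V}
    (hS : Pairwise (Disjoint on S)) (hdom : ∀ i, TotalDomSet G (S i)) :
    Fintype.card ι ≤ G.minDegree :=
  G.le_minDegree_of_forall_le_degree _ (card_le_degree_of_pairwise_disjoint_totalDomSet hS hdom)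

theorem statement_11_general [Fintype V] [DecidableEq V]
    (G : SimpleGraph V) [DecidableRel G.Adj]
    (Ψ : Finset (Finset V)) (hΨ : IsTCPartition G Ψ)
    (m : ℕ) (A B : Fin m → Finset V)
    (hA : ∀ i, A i ∈ Ψ) (hB : ∀ i, B i ∈ Ψ)
    (hinj : Function.Injective (Sum.elim A B))
    (hcoal : ∀ i, TotalCoalition G (A i) (B i)) :
    m ≤ G.minDegree := by
  rcases m.eq_zero_or_pos with rfl | hm
  · exact Nat.zero_le _
  obtain ⟨x, -⟩ := hΨ.1 _ (hA ⟨0, hm⟩)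
  have : Nonempty V := ⟨x⟩
  simpa using card_le_minDegree_of_pairwise_disjoint_totalDomSet
    (hΨ.pairwise_disjoint_union hA hB hinj) fun i => (hcoal i).2.2.2

/-- If `2m` pairwise distinct classes of a total coalition partition form `m` total
coalition pairs (a matching of size `m` in `TCG(G,Ψ)`), then `m ≤ δ(G)`. -/
theorem statement_11 [Fintype V] [DecidableEq V]
    (G : SimpleGraph V) [DecidableRel G.Adj] (hG : IsolateFree G)
    (Ψ : Finset (Finset V)) (hΨ : IsTCPartition G Ψ)
    (m : ℕ) (A B : Fin m → Finset V)
    (hA : ∀ i, A i ∈ Ψ) (hB : ∀ i, B i ∈ Ψ)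
    (hinj : Function.Injective (Sum.elim A B))
    (hcoal : ∀ i, TotalCoalition G (A i) (B i)) :
    m ≤ G.minDegree :=
  statement_11_general G Ψ hΨ m A B hA hB hinj hcoal
end
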